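/- arXiv:2201.12052 — 5 statements merged into one kernel-verified Lean document; each statement's English description precedes it below -/
import Mathlib

section
/- Let N, d0, d1, d2 be positive integers, X ∈ ℝ^{N×d0}, Y ∈ ℝ^{N×d2}, and T ∈ (0,∞]. Let W : [0,T) → ℝ^{d0×d1} and V : [0,T) → ℝ^{d1×d2} be absolutely continuous curves satisfying, for a.e. s ∈ [0,T), ‖W'(s)‖_F ≤ ‖X‖_op ‖V(s)‖_F √(2 L(s)) and ‖V'(s)‖_F ≤ ‖X‖_op ‖W(s)‖_F √(2 L(s)). Then for every t ∈ [0,T): √(‖W(t)−W(0)‖_F² + ‖V(t)−V(0)‖_F²) ≤ √2 · ‖X‖_op · (‖W(0)‖_F + ‖V(0)‖_F) · L̄(t) · exp(√2 · ‖X‖_op · L̄(t)), where L̄(t) = ∫₀ᵗ √(L(s)) ds. -/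
/-! Put `u(r) = ‖W(r) - W(0)‖_F + ‖V(r) - V(0)‖_F` and `A = ‖W(0)‖_F + ‖V(0)‖_F`. Integrating the
derivative bounds and using `‖V(s)‖_F ≤ ‖V(s) - V(0)‖_F + ‖V(0)‖_F` (likewise for `W`) gives
`u(r) ≤ ∫₀ʳ c √L (u + A)` with `c = √2 ‖X‖_op`. Grönwall's inequality turns this into
`u(t) ≤ A (exp (c L̄(t)) - 1) ≤ A c L̄(t) exp (c L̄(t))`, and the left-hand side of the claim is at
most `u(t)`. -/

open MeasureTheory ProbabilityTheory
open scoped ENNReal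

noncomputable section

/-- The ReLU function. -/
def relu (x : ℝ) : ℝ := max x 0

/-- Frobenius norm of a real matrix. -/
def frob {m n : ℕ} (A : Matrix (Fin m) (Fin n) ℝ) : ℝ :=
  Real.sqrt (∑ i, ∑ j, (A i j) ^ 2)

/-- ℓ²→ℓ² operator norm of a real matrix. -/
def opNorm {m n : ℕ} (A : Matrix (Fin m) (Fin n) ℝ) : ℝ :=
  ‖LinearMap.toContinuousLinearMap (Matrix.toEuclideanLin A)‖

/-- The MSE loss `L(W,V) = (1/2)‖Y − φ(XW)V‖_F²`. -/
def mseLoss {N d0 d1 d2 : ℕ} (X : Matrix (Fin N) (Fin d0) ℝ) (Y : Matrix (Fin N) (Fin d2) ℝ)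
    (W : Matrix (Fin d0) (Fin d1) ℝ) (V : Matrix (Fin d1) (Fin d2) ℝ) : ℝ :=
  (1 / 2) * (frob (Y - ((X * W).map relu) * V)) ^ 2

open Set

section Frobenius

variable {m n : ℕ}

def frobVec : Matrix (Fin m) (Fin n) ℝ →ₗ[ℝ] EuclideanSpace ℝ (Fin m × Fin n) where
  toFun A := WithLp.toLp 2 fun p => A p.1 p.2
  map_add' _ _ := rfl
  map_smul' _ _ := rfl

@[simp]
theorem frobVec_apply (A : Matrix (Fin m) (Fin n) ℝ) (p : Fin m × Fin n) :
    frobVec A p = A p.1 p.2 :=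
  rfl

theorem frob_eq_norm_frobVec (A : Matrix (Fin m) (Fin n) ℝ) : frob A = ‖frobVec A‖ := by
  rw [EuclideanSpace.norm_eq, frob, Fintype.sum_prod_type]
  simp only [frobVec_apply, Real.norm_eq_abs, sq_abs]

theorem frob_nonneg (A : Matrix (Fin m) (Fin n) ℝ) : 0 ≤ frob A := Real.sqrt_nonneg _

theorem frob_le_frob_add_frob_sub (A B : Matrix (Fin m) (Fin n) ℝ) :
    frob A ≤ frob B + frob (A - B) := by
  simpa only [frob_eq_norm_frobVec, map_sub] using
    norm_le_norm_add_norm_sub' (frobVec A) (frobVec B)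

theorem continuous_frob : Continuous (frob : Matrix (Fin m) (Fin n) ℝ → ℝ) := by
  unfold frob
  fun_prop

theorem frob_intervalIntegral_le {g : ℝ → Matrix (Fin m) (Fin n) ℝ} {h : ℝ → ℝ} {t : ℝ}
    (ht : 0 ≤ t) (hg : ∀ i j, IntervalIntegrable (fun s => g s i j) volume 0 t)
    (hh : IntervalIntegrable h volume 0 t) (hgh : ∀ᵐ s, s ∈ Ioc 0 t → frob (g s) ≤ h s) :
    frob (Matrix.of fun i j => ∫ s in (0:ℝ)..t, g s i j) ≤ ∫ s in (0:ℝ)..t, h s := by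
  have hint : frobVec (Matrix.of fun i j => ∫ s in (0:ℝ)..t, g s i j) =
      ∫ s in (0:ℝ)..t, frobVec (g s) := by
    ext p
    simp only [intervalIntegral.integral_of_le ht]
    exact (eval_integral_piLp (f := fun s => frobVec (g s)) (fun q => (hg q.1 q.2).1) p).symm
  rw [frob_eq_norm_frobVec, hint]
  exact intervalIntegral.norm_integral_le_of_norm_le ht
    (by simpa only [frob_eq_norm_frobVec] using hgh) hh

end Frobenius

theorem continuous_mseLoss {N d0 d1 d2 : ℕ} (X : Matrix (Fin N) (Fin d0) ℝ)
    (Y : Matrix (Fin N) (Fin d2) ℝ) :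
    Continuous fun WV : Matrix (Fin d0) (Fin d1) ℝ × Matrix (Fin d1) (Fin d2) ℝ =>
      mseLoss X Y WV.1 WV.2 := by
  have hrelu : Continuous relu := continuous_id.max continuous_const
  unfold mseLoss
  exact continuous_const.mul ((continuous_frob.comp (continuous_const.sub
    (((continuous_const.matrix_mul continuous_fst).matrix_map hrelu).matrix_mul
      continuous_snd))).pow 2)

theorem Real.exp_sub_one_le_mul_exp (x : ℝ) : Real.exp x - 1 ≤ x * Real.exp x := by
  have h := Real.add_one_le_exp (-x)
  rw [Real.exp_neg] at h
  have hx := Real.exp_pos x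
  have : (-x + 1) * Real.exp x ≤ 1 := by
    calc (-x + 1) * Real.exp x ≤ (Real.exp x)⁻¹ * Real.exp x := by gcongr
      _ = 1 := inv_mul_cancel₀ hx.ne'
  linarith

theorem ContinuousOn.hasDerivAt_integral_of_mem_Ioo {f : ℝ → ℝ} {a b x : ℝ}
    (hf : ContinuousOn f (Icc a b)) (hx : x ∈ Ioo a b) :
    HasDerivAt (fun r => ∫ s in a..r, f s) (f x) x :=
  intervalIntegral.integral_hasDerivAt_right
    ((hf.mono (by rw [uIcc_of_le hx.1.le]; exact Icc_subset_Icc_right hx.2.le)).intervalIntegrable)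
    ((hf.mono Ioo_subset_Icc_self).stronglyMeasurableAtFilter isOpen_Ioo x hx)
    (hf.continuousAt (Icc_mem_nhds hx.1 hx.2))

theorem ContinuousOn.continuousOn_integral {f : ℝ → ℝ} {a b : ℝ} (hab : a ≤ b)
    (hf : ContinuousOn f (Icc a b)) : ContinuousOn (fun r => ∫ s in a..r, f s) (Icc a b) := by
  rw [← uIcc_of_le hab] at hf ⊢
  exact intervalIntegral.continuousOn_primitive_interval (hf.integrableOn_compact isCompact_uIcc)

theorem le_mul_exp_integral_sub_one_of_le_integral {u b : ℝ → ℝ} {A t : ℝ} (ht : 0 ≤ t)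
    (hu : ContinuousOn u (Icc 0 t)) (hb : ContinuousOn b (Icc 0 t))
    (hb₀ : ∀ s ∈ Icc 0 t, 0 ≤ b s)
    (hub : ∀ r ∈ Icc 0 t, u r ≤ ∫ s in (0:ℝ)..r, b s * (u s + A)) :
    u t ≤ A * (Real.exp (∫ s in (0:ℝ)..t, b s) - 1) := by
  set g := fun s => b s * (u s + A)
  have hg : ContinuousOn g (Icc 0 t) := hb.mul (hu.add continuousOn_const)
  set G := fun r => ∫ s in (0:ℝ)..r, g s
  set B := fun r => ∫ s in (0:ℝ)..r, b s
  -- `(G + A) e^{-B}` is antitone because `G' = b (u + A) ≤ b (G + A)`.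
  have hanti : AntitoneOn (fun r => (G r + A) * Real.exp (-B r)) (Icc 0 t) := by
    refine antitoneOn_of_hasDerivWithinAt_nonpos (convex_Icc 0 t)
      (f' := fun x => g x * Real.exp (-B x) + (G x + A) * (Real.exp (-B x) * -b x))
      (((hg.continuousOn_integral ht).add continuousOn_const).mul
        (hb.continuousOn_integral ht).neg.rexp) (fun x hx => ?_) (fun x hx => ?_)
    · rw [interior_Icc] at hx
      exact (((hg.hasDerivAt_integral_of_mem_Ioo hx).add_const A).mul
        (hb.hasDerivAt_integral_of_mem_Ioo hx).neg.exp).hasDerivWithinAt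
    · rw [interior_Icc] at hx
      have hux := hub x (Ioo_subset_Icc_self hx)
      have hbx := hb₀ x (Ioo_subset_Icc_self hx)
      have : g x * Real.exp (-B x) + (G x + A) * (Real.exp (-B x) * -b x) =
          -(b x * (G x - u x) * Real.exp (-B x)) := by ring
      rw [this, neg_nonpos]
      exact mul_nonneg (mul_nonneg hbx (sub_nonneg.2 hux)) (Real.exp_pos _).le
  have hzt := hanti (left_mem_Icc.2 ht) (right_mem_Icc.2 ht) ht
  simp only [G, B, intervalIntegral.integral_same, neg_zero, Real.exp_zero, zero_add, mul_one,
    Real.exp_neg] at hzt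
  have hGt : G t + A ≤ A * Real.exp (B t) := by
    rwa [← div_eq_mul_inv, div_le_iff₀ (Real.exp_pos _)] at hzt
  linarith [hub t (right_mem_Icc.2 ht)]

def IsPrimitiveOn {m n : ℕ} (F F' : ℝ → Matrix (Fin m) (Fin n) ℝ) (t : ℝ) : Prop :=
  ∀ r ∈ Icc 0 t, ∀ i j,
    IntervalIntegrable (fun s => F' s i j) volume 0 r ∧
      F r i j - F 0 i j = ∫ s in (0:ℝ)..r, F' s i j

namespace IsPrimitiveOn

variable {m n : ℕ} {F F' : ℝ → Matrix (Fin m) (Fin n) ℝ} {t : ℝ}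

theorem continuousOn (hF : IsPrimitiveOn F F' t) : ContinuousOn F (Icc 0 t) := by
  intro x hx
  have ht : 0 ≤ t := hx.1.trans hx.2
  refine continuousOn_pi.2 (fun i => continuousOn_pi.2 fun j => ?_) x hx
  have hprim := intervalIntegral.continuousOn_primitive_interval'
    (hF t (right_mem_Icc.2 ht) i j).1 left_mem_uIcc
  rw [uIcc_of_le ht] at hprim
  refine (continuousOn_const (c := F 0 i j)).add hprim |>.congr fun r hr => ?_
  simp only [Pi.add_apply]
  linarith [(hF r hr i j).2]

theorem frob_sub_le (hF : IsPrimitiveOn F F' t) {r : ℝ} (hr : r ∈ Icc 0 t) {h : ℝ → ℝ}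
    (hh : IntervalIntegrable h volume 0 r) (hF' : ∀ᵐ s, s ∈ Ioc 0 r → frob (F' s) ≤ h s) :
    frob (F r - F 0) ≤ ∫ s in (0:ℝ)..r, h s := by
  have hincr : F r - F 0 = Matrix.of fun i j => ∫ s in (0:ℝ)..r, F' s i j := by
    ext i j
    exact (hF r hr i j).2
  rw [hincr]
  exact frob_intervalIntegral_le hr.1 (fun i j => (hF r hr i j).1) hh hF'

end IsPrimitiveOn

theorem mul_frob_mul_sqrt_two_mul_le {m n : ℕ} {k : ℝ} (hk : 0 ≤ k)
    (A B : Matrix (Fin m) (Fin n) ℝ) (ℓ : ℝ) :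
    k * frob A * √(2 * ℓ) ≤ √2 * k * √ℓ * (frob (A - B) + frob B) := by
  rw [Real.sqrt_mul zero_le_two]
  calc k * frob A * (√2 * √ℓ) = √2 * k * √ℓ * frob A := by ring
    _ ≤ √2 * k * √ℓ * (frob (A - B) + frob B) := by
      gcongr
      linarith [frob_le_frob_add_frob_sub A B]

section Increment

variable {d0 d1 d2 : ℕ} {W W' : ℝ → Matrix (Fin d0) (Fin d1) ℝ}
  {V V' : ℝ → Matrix (Fin d1) (Fin d2) ℝ} {k t : ℝ} {ℓ : ℝ → ℝ}

theorem increment_le_integral (hk : 0 ≤ k) (hW : IsPrimitiveOn W W' t)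
    (hV : IsPrimitiveOn V V' t) (hℓ : ContinuousOn ℓ (Icc 0 t))
    (hW' : ∀ᵐ s, s ∈ Ioc 0 t → frob (W' s) ≤ k * frob (V s) * √(2 * ℓ s))
    (hV' : ∀ᵐ s, s ∈ Ioc 0 t → frob (V' s) ≤ k * frob (W s) * √(2 * ℓ s)) :
    ∀ r ∈ Icc 0 t, frob (W r - W 0) + frob (V r - V 0) ≤
      ∫ s in (0:ℝ)..r, √2 * k * √(ℓ s) *
        (frob (W s - W 0) + frob (V s - V 0) + (frob (W 0) + frob (V 0))) := by
  intro r hr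
  have hsub : Icc 0 r ⊆ Icc 0 t := Icc_subset_Icc_right hr.2
  have hint : ∀ {a b : ℕ} {F : ℝ → Matrix (Fin a) (Fin b) ℝ}, ContinuousOn F (Icc 0 t) →
      IntervalIntegrable (fun s => √2 * k * √(ℓ s) * (frob (F s - F 0) + frob (F 0))) volume 0 r :=
    fun hF => ContinuousOn.intervalIntegrable <| by
      rw [uIcc_of_le hr.1]
      exact (continuousOn_const.mul (Real.continuous_sqrt.comp_continuousOn hℓ)).mul
        ((continuous_frob.comp_continuousOn (hF.sub continuousOn_const)).add continuousOn_const)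
        |>.mono hsub
  calc frob (W r - W 0) + frob (V r - V 0)
      ≤ (∫ s in (0:ℝ)..r, √2 * k * √(ℓ s) * (frob (V s - V 0) + frob (V 0))) +
          ∫ s in (0:ℝ)..r, √2 * k * √(ℓ s) * (frob (W s - W 0) + frob (W 0)) :=
        add_le_add
          (hW.frob_sub_le hr (hint hV.continuousOn) <| by
            filter_upwards [hW'] with s hs hsr using
              (hs (Ioc_subset_Ioc_right hr.2 hsr)).trans (mul_frob_mul_sqrt_two_mul_le hk _ _ _))
          (hV.frob_sub_le hr (hint hW.continuousOn) <| by
            filter_upwards [hV'] with s hs hsr using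
              (hs (Ioc_subset_Ioc_right hr.2 hsr)).trans (mul_frob_mul_sqrt_two_mul_le hk _ _ _))
    _ = _ := by
      rw [← intervalIntegral.integral_add (hint hV.continuousOn) (hint hW.continuousOn)]
      congr 1 with s
      ring

theorem sqrt_frob_sq_add_frob_sq_le (hk : 0 ≤ k) (ht : 0 ≤ t) (hW : IsPrimitiveOn W W' t)
    (hV : IsPrimitiveOn V V' t) (hℓ : ContinuousOn ℓ (Icc 0 t))
    (hW' : ∀ᵐ s, s ∈ Ioc 0 t → frob (W' s) ≤ k * frob (V s) * √(2 * ℓ s))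
    (hV' : ∀ᵐ s, s ∈ Ioc 0 t → frob (V' s) ≤ k * frob (W s) * √(2 * ℓ s)) :
    √(frob (W t - W 0) ^ 2 + frob (V t - V 0) ^ 2) ≤
      √2 * k * (frob (W 0) + frob (V 0)) * (∫ s in (0:ℝ)..t, √(ℓ s)) *
        Real.exp (√2 * k * ∫ s in (0:ℝ)..t, √(ℓ s)) := by
  set A := frob (W 0) + frob (V 0)
  set I := ∫ s in (0:ℝ)..t, √(ℓ s)
  have hu : ContinuousOn (fun r => frob (W r - W 0) + frob (V r - V 0)) (Icc 0 t) :=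
    (continuous_frob.comp_continuousOn (hW.continuousOn.sub continuousOn_const)).add
      (continuous_frob.comp_continuousOn (hV.continuousOn.sub continuousOn_const))
  have hgron := le_mul_exp_integral_sub_one_of_le_integral (b := fun s => √2 * k * √(ℓ s)) ht hu
    (continuousOn_const.mul (Real.continuous_sqrt.comp_continuousOn hℓ)) (fun s _ => by positivity)
    (increment_le_integral hk hW hV hℓ hW' hV')
  rw [intervalIntegral.integral_const_mul] at hgron
  have hA : 0 ≤ A := add_nonneg (frob_nonneg _) (frob_nonneg _)
  calc √(frob (W t - W 0) ^ 2 + frob (V t - V 0) ^ 2)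
      ≤ frob (W t - W 0) + frob (V t - V 0) :=
        Real.sqrt_le_iff.2 ⟨add_nonneg (frob_nonneg _) (frob_nonneg _),
          by nlinarith [mul_nonneg (frob_nonneg (W t - W 0)) (frob_nonneg (V t - V 0))]⟩
    _ ≤ A * (Real.exp (√2 * k * I) - 1) := hgron
    _ ≤ A * (√2 * k * I * Real.exp (√2 * k * I)) := by
      gcongr
      exact Real.exp_sub_one_le_mul_exp _
    _ = √2 * k * A * I * Real.exp (√2 * k * I) := by ring

end Increment

theorem statement3_general
    (N d0 d1 d2 : ℕ)
    (X : Matrix (Fin N) (Fin d0) ℝ) (Y : Matrix (Fin N) (Fin d2) ℝ)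
    (T : ℝ≥0∞)
    (W : ℝ → Matrix (Fin d0) (Fin d1) ℝ) (V : ℝ → Matrix (Fin d1) (Fin d2) ℝ)
    (W' : ℝ → Matrix (Fin d0) (Fin d1) ℝ) (V' : ℝ → Matrix (Fin d1) (Fin d2) ℝ)
    (L : ℝ → ℝ) (hL : L = fun s => mseLoss X Y (W s) (V s))
    -- absolute continuity of `W` with derivative `W'` (entrywise, in the sense of FTC)
    (hWac : ∀ t : ℝ, 0 ≤ t → ENNReal.ofReal t < T → ∀ i j,
      IntervalIntegrable (fun s => W' s i j) volume 0 t ∧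
      W t i j - W 0 i j = ∫ s in (0:ℝ)..t, W' s i j)
    -- absolute continuity of `V` with derivative `V'`
    (hVac : ∀ t : ℝ, 0 ≤ t → ENNReal.ofReal t < T → ∀ i j,
      IntervalIntegrable (fun s => V' s i j) volume 0 t ∧
      V t i j - V 0 i j = ∫ s in (0:ℝ)..t, V' s i j)
    -- a.e. derivative bounds on [0,T)
    (hW' : ∀ᵐ s ∂volume, 0 ≤ s → ENNReal.ofReal s < T →
      frob (W' s) ≤ opNorm X * frob (V s) * Real.sqrt (2 * L s))
    (hV' : ∀ᵐ s ∂volume, 0 ≤ s → ENNReal.ofReal s < T →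
      frob (V' s) ≤ opNorm X * frob (W s) * Real.sqrt (2 * L s)) :
    ∀ t : ℝ, 0 ≤ t → ENNReal.ofReal t < T →
      Real.sqrt (frob (W t - W 0) ^ 2 + frob (V t - V 0) ^ 2) ≤
        Real.sqrt 2 * opNorm X * (frob (W 0) + frob (V 0)) *
          (∫ s in (0:ℝ)..t, Real.sqrt (L s)) *
          Real.exp (Real.sqrt 2 * opNorm X * (∫ s in (0:ℝ)..t, Real.sqrt (L s))) := by
  intro t ht hTt
  have hlt : ∀ r ∈ Icc 0 t, ENNReal.ofReal r < T := fun r hr =>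
    (ENNReal.ofReal_le_ofReal hr.2).trans_lt hTt
  have hW : IsPrimitiveOn W W' t := fun r hr => hWac r hr.1 (hlt r hr)
  have hV : IsPrimitiveOn V V' t := fun r hr => hVac r hr.1 (hlt r hr)
  have hLc : ContinuousOn L (Icc 0 t) := by
    rw [hL]
    exact (continuous_mseLoss X Y).comp_continuousOn (f := fun s => (W s, V s))
      (hW.continuousOn.prodMk hV.continuousOn)
  refine sqrt_frob_sq_add_frob_sq_le (norm_nonneg _) ht hW hV hLc ?_ ?_
  · filter_upwards [hW'] with s hs hst using hs hst.1.le (hlt s (Ioc_subset_Icc_self hst))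
  · filter_upwards [hV'] with s hs hst using hs hst.1.le (hlt s (Ioc_subset_Icc_self hst))

/-- Lemma: increment bound for the parameter trajectory. -/
theorem statement3
    (N d0 d1 d2 : ℕ) (hN : 0 < N) (hd0 : 0 < d0) (hd1 : 0 < d1) (hd2 : 0 < d2)
    (X : Matrix (Fin N) (Fin d0) ℝ) (Y : Matrix (Fin N) (Fin d2) ℝ)
    (T : ℝ≥0∞) (hT : 0 < T)
    (W : ℝ → Matrix (Fin d0) (Fin d1) ℝ) (V : ℝ → Matrix (Fin d1) (Fin d2) ℝ)
    (W' : ℝ → Matrix (Fin d0) (Fin d1) ℝ) (V' : ℝ → Matrix (Fin d1) (Fin d2) ℝ)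
    (L : ℝ → ℝ) (hL : L = fun s => mseLoss X Y (W s) (V s))
    -- absolute continuity of `W` with derivative `W'` (entrywise, in the sense of FTC)
    (hWac : ∀ t : ℝ, 0 ≤ t → ENNReal.ofReal t < T → ∀ i j,
      IntervalIntegrable (fun s => W' s i j) volume 0 t ∧
      W t i j - W 0 i j = ∫ s in (0:ℝ)..t, W' s i j)
    -- absolute continuity of `V` with derivative `V'`
    (hVac : ∀ t : ℝ, 0 ≤ t → ENNReal.ofReal t < T → ∀ i j,
      IntervalIntegrable (fun s => V' s i j) volume 0 t ∧
      V t i j - V 0 i j = ∫ s in (0:ℝ)..t, V' s i j)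
    -- a.e. derivative bounds on [0,T)
    (hW' : ∀ᵐ s ∂volume, 0 ≤ s → ENNReal.ofReal s < T →
      frob (W' s) ≤ opNorm X * frob (V s) * Real.sqrt (2 * L s))
    (hV' : ∀ᵐ s ∂volume, 0 ≤ s → ENNReal.ofReal s < T →
      frob (V' s) ≤ opNorm X * frob (W s) * Real.sqrt (2 * L s)) :
    ∀ t : ℝ, 0 ≤ t → ENNReal.ofReal t < T →
      Real.sqrt (frob (W t - W 0) ^ 2 + frob (V t - V 0) ^ 2) ≤
        Real.sqrt 2 * opNorm X * (frob (W 0) + frob (V 0)) *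
          (∫ s in (0:ℝ)..t, Real.sqrt (L s)) *
          Real.exp (Real.sqrt 2 * opNorm X * (∫ s in (0:ℝ)..t, Real.sqrt (L s))) :=
  statement3_general N d0 d1 d2 X Y T W V W' V' L hL hWac hVac hW' hV'
end
end

section
/- Let a ≥ 0, α > 0, and c, c₁, c₂ ≥ 0 be real numbers satisfying 4 · (a c₁/α³ + 2 a² c₂/α⁵) · exp(4 c a²/α⁴) < 1. Let T ∈ (0,∞] and let y : [0,T) → ℝ be a differentiable function with y(0) = 0, y(t) ≥ 0 for all t ∈ [0,T), and y'(t) ≤ a · exp( α t (c₁ y(t) + c₂ y(t)²) e^{c y(t)²} − α² t ) for all t ∈ [0,T). Then for every t ∈ [0,T): y(t) ≤ 2a/α² and y'(t) ≤ a · e^{−α² t / 2}. -/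
/-!
Put `B = 2a/α²` and `K = α (c₁ B + c₂ B²) e^{c B²}`; the smallness condition says exactly
`2K < α²`. While `0 ≤ y ≤ B`, the exponent in the differential inequality is at most
`-(α² - K) t`, so `y' ≤ a e^{-β t}` with `β = α² - K > α²/2`. Since `a < B β`, the barrier
`B (1 - e^{-β t})` is never crossed, hence `y` stays below `B`, and then
`y' ≤ a e^{-β t} ≤ a e^{-α² t/2}`.
-/

open scoped ENNReal
open Real Set

/-- The maximum of `u ↦ α (c₁ u + c₂ u²) e^{c u²}` on `[0, B]`, attained at `u = B`. -/
noncomputable def growthBound (α c c₁ c₂ B : ℝ) : ℝ :=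
  α * (c₁ * B + c₂ * B ^ 2) * exp (c * B ^ 2)

section GrowthBound

variable {α c c₁ c₂ : ℝ}

lemma exponent_le_neg_mul {B s u : ℝ} (hα : 0 ≤ α) (hc : 0 ≤ c) (hc₁ : 0 ≤ c₁) (hc₂ : 0 ≤ c₂)
    (hs : 0 ≤ s) (hu : 0 ≤ u) (huB : u ≤ B) :
    α * s * (c₁ * u + c₂ * u ^ 2) * exp (c * u ^ 2) - α ^ 2 * s ≤
      -(α ^ 2 - growthBound α c c₁ c₂ B) * s := by
  have hgrowth : α * s * (c₁ * u + c₂ * u ^ 2) * exp (c * u ^ 2) ≤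
      α * s * (c₁ * B + c₂ * B ^ 2) * exp (c * B ^ 2) := by
    have hB : 0 ≤ B := hu.trans huB
    gcongr
  rw [growthBound]
  linarith

lemma two_mul_growthBound_lt_sq {a : ℝ} (hα : 0 < α)
    (hcond : 4 * (a * c₁ / α ^ 3 + 2 * a ^ 2 * c₂ / α ^ 5) *
      exp (4 * c * a ^ 2 / α ^ 4) < 1) :
    2 * growthBound α c c₁ c₂ (2 * a / α ^ 2) < α ^ 2 := by
  have hα2 : 0 < α ^ 2 := by positivity
  have heq : 2 * growthBound α c c₁ c₂ (2 * a / α ^ 2) / α ^ 2 =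
      4 * (a * c₁ / α ^ 3 + 2 * a ^ 2 * c₂ / α ^ 5) * exp (4 * c * a ^ 2 / α ^ 4) := by
    rw [growthBound, show c * (2 * a / α ^ 2) ^ 2 = 4 * c * a ^ 2 / α ^ 4 by ring]
    field_simp
    ring
  rw [← div_lt_one hα2, heq]
  exact hcond

end GrowthBound

lemma hasDerivAt_mul_one_sub_exp (M β s : ℝ) :
    HasDerivAt (fun u ↦ M * (1 - exp (-β * u))) (M * (β * exp (-β * s))) s := by
  have hlin : HasDerivAt (fun u : ℝ ↦ -β * u) (-β) s := by
    simpa using (hasDerivAt_id s).const_mul (-β)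
  exact ((hlin.exp.const_sub 1).const_mul M).congr_deriv (by ring)

theorem le_mul_one_sub_exp_of_deriv_le {f f' : ℝ → ℝ} {t a β M : ℝ} (hM : 0 ≤ M)
    (haM : a < M * β) (hf : ContinuousOn f (Icc 0 t))
    (hf' : ∀ s ∈ Ico 0 t, HasDerivWithinAt f (f' s) (Ici s) s) (h0 : f 0 ≤ 0)
    (hbound : ∀ s ∈ Ico 0 t, f s ≤ M → f' s ≤ a * exp (-β * s)) :
    ∀ s ∈ Icc 0 t, f s ≤ M * (1 - exp (-β * s)) := by
  refine image_le_of_deriv_right_lt_deriv_boundary' hf hf' (by simpa using h0)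
    (by fun_prop) (fun s _ ↦ (hasDerivAt_mul_one_sub_exp M β s).hasDerivWithinAt) ?_
  intro s hs hfs
  have hfM : f s ≤ M := by
    rw [hfs]
    nlinarith [mul_nonneg hM (exp_pos (-β * s)).le]
  calc f' s ≤ a * exp (-β * s) := hbound s hs hfM
    _ < M * β * exp (-β * s) := by gcongr
    _ = M * (β * exp (-β * s)) := by ring

theorem le_of_deriv_le_exp_growth {f f' : ℝ → ℝ} {t a α c c₁ c₂ M : ℝ} (ha : 0 ≤ a) (hα : 0 < α)
    (hc : 0 ≤ c) (hc₁ : 0 ≤ c₁) (hc₂ : 0 ≤ c₂) (haM : 2 * a ≤ M * α ^ 2)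
    (hK : 2 * growthBound α c c₁ c₂ M < α ^ 2) (hf : ContinuousOn f (Icc 0 t))
    (hf' : ∀ s ∈ Ico 0 t, HasDerivWithinAt f (f' s) (Ici s) s) (h0 : f 0 = 0)
    (hnn : ∀ s ∈ Ico 0 t, 0 ≤ f s)
    (hbound : ∀ s ∈ Ico 0 t,
      f' s ≤ a * exp (α * s * (c₁ * f s + c₂ * f s ^ 2) * exp (c * f s ^ 2) - α ^ 2 * s)) :
    ∀ s ∈ Icc 0 t, f s ≤ M := by
  -- The barrier argument needs `a < M β` strictly, which fails when `a = M = 0`.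
  rcases ha.eq_or_lt with rfl | ha
  · have hM : 0 ≤ M := by nlinarith [pow_pos hα 2]
    have hnonpos : ∀ s ∈ Icc 0 t, f s ≤ 0 :=
      image_le_of_deriv_right_le_deriv_boundary hf hf' h0.le continuousOn_const
        (fun s _ ↦ hasDerivWithinAt_const s _ 0) (fun s hs ↦ by simpa using hbound s hs)
    exact fun s hs ↦ (hnonpos s hs).trans hM
  · have hM : 0 < M := by nlinarith [pow_pos hα 2]
    have hderiv_le : ∀ s ∈ Ico 0 t, f s ≤ M →
        f' s ≤ a * exp (-(α ^ 2 - growthBound α c c₁ c₂ M) * s) := fun s hs hfM ↦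
      (hbound s hs).trans <| by
        gcongr
        exact exponent_le_neg_mul hα.le hc hc₁ hc₂ hs.1 (hnn s hs) hfM
    have hbarrier := le_mul_one_sub_exp_of_deriv_le hM.le (by nlinarith) hf hf' h0.le hderiv_le
    intro s hs
    nlinarith [hbarrier s hs, mul_pos hM (exp_pos (-(α ^ 2 - growthBound α c c₁ c₂ M) * s))]

theorem statement5_general
    (a α c c₁ c₂ : ℝ) (ha : 0 ≤ a) (hα : 0 < α) (hc : 0 ≤ c) (hc₁ : 0 ≤ c₁) (hc₂ : 0 ≤ c₂)
    (hcond : 4 * (a * c₁ / α ^ 3 + 2 * a ^ 2 * c₂ / α ^ 5) *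
        Real.exp (4 * c * a ^ 2 / α ^ 4) < 1)
    (T : ℝ≥0∞)
    (y y' : ℝ → ℝ)
    (hderiv : ∀ t : ℝ, 0 ≤ t → ENNReal.ofReal t < T →
      HasDerivWithinAt y (y' t) (Set.Ici 0) t)
    (hy0 : y 0 = 0)
    (hynn : ∀ t : ℝ, 0 ≤ t → ENNReal.ofReal t < T → 0 ≤ y t)
    (hbound : ∀ t : ℝ, 0 ≤ t → ENNReal.ofReal t < T →
      y' t ≤ a * Real.exp (α * t * (c₁ * y t + c₂ * y t ^ 2) *
          Real.exp (c * y t ^ 2) - α ^ 2 * t)) :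
    ∀ t : ℝ, 0 ≤ t → ENNReal.ofReal t < T →
      y t ≤ 2 * a / α ^ 2 ∧ y' t ≤ a * Real.exp (-α ^ 2 * t / 2) := by
  intro t ht htT
  have hK := two_mul_growthBound_lt_sq (c := c) (c₁ := c₁) (c₂ := c₂) hα hcond
  have hlt : ∀ s ∈ Icc 0 t, ENNReal.ofReal s < T := fun s hs ↦
    (ENNReal.ofReal_le_ofReal hs.2).trans_lt htT
  have hyt : y t ≤ 2 * a / α ^ 2 := by
    refine le_of_deriv_le_exp_growth ha hα hc hc₁ hc₂
      (div_mul_cancel₀ (2 * a) (pow_pos hα 2).ne').ge hK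
      (fun s hs ↦ (hderiv s hs.1 (hlt s hs)).continuousWithinAt.mono fun _ hx ↦ hx.1)
      (fun s hs ↦ (hderiv s hs.1 (hlt s (Ico_subset_Icc_self hs))).mono (Ici_subset_Ici.2 hs.1))
      hy0 (fun s hs ↦ hynn s hs.1 (hlt s (Ico_subset_Icc_self hs)))
      (fun s hs ↦ hbound s hs.1 (hlt s (Ico_subset_Icc_self hs))) t ⟨ht, le_rfl⟩
  refine ⟨hyt, (hbound t ht htT).trans ?_⟩
  have hexp := exponent_le_neg_mul hα.le hc hc₁ hc₂ ht (hynn t ht htT) hyt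
  gcongr
  nlinarith

/-- solutions of the one-dimensional differential inequality stay
bounded under the smallness condition on the constants. -/
theorem statement5
    (a α c c₁ c₂ : ℝ) (ha : 0 ≤ a) (hα : 0 < α) (hc : 0 ≤ c) (hc₁ : 0 ≤ c₁) (hc₂ : 0 ≤ c₂)
    (hcond : 4 * (a * c₁ / α ^ 3 + 2 * a ^ 2 * c₂ / α ^ 5) *
        Real.exp (4 * c * a ^ 2 / α ^ 4) < 1)
    (T : ℝ≥0∞) (hT : 0 < T)
    (y y' : ℝ → ℝ)
    (hderiv : ∀ t : ℝ, 0 ≤ t → ENNReal.ofReal t < T →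
      HasDerivWithinAt y (y' t) (Set.Ici 0) t)
    (hy0 : y 0 = 0)
    (hynn : ∀ t : ℝ, 0 ≤ t → ENNReal.ofReal t < T → 0 ≤ y t)
    (hbound : ∀ t : ℝ, 0 ≤ t → ENNReal.ofReal t < T →
      y' t ≤ a * Real.exp (α * t * (c₁ * y t + c₂ * y t ^ 2) *
          Real.exp (c * y t ^ 2) - α ^ 2 * t)) :
    ∀ t : ℝ, 0 ≤ t → ENNReal.ofReal t < T →
      y t ≤ 2 * a / α ^ 2 ∧ y' t ≤ a * Real.exp (-α ^ 2 * t / 2) :=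
  statement5_general a α c c₁ c₂ ha hα hc hc₁ hc₂ hcond T y y' hderiv hy0 hynn hbound
end

section
/- Let N, d0, d1, d2 be positive integers, X ∈ ℝ^{N×d0}, Y ∈ ℝ^{N×d2}, and T ∈ (0,∞]. Let W : [0,T) → ℝ^{d0×d1} and V : [0,T) → ℝ^{d1×d2} be continuous curves, and set ℓ(t) = (1/2)‖Y − φ(X W(t)) V(t)‖_F². Assume ℓ is locally absolutely continuous on [0,T) and that its derivative satisfies ℓ'(t) ≤ −‖ φ(X W(t))ᵀ (Y − φ(X W(t)) V(t)) ‖_F² for a.e. t ∈ [0,T). Then for every t ∈ [0,T): ℓ(t) ≤ ℓ(0) · exp( −2 ∫₀ᵗ σ_min(φ(X W(s))ᵀ)² ds ). -/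
open MeasureTheory
open scoped ENNReal

noncomputable section

/-- Smallest eigenvalue of a Hermitian real matrix (0 if the matrix is not Hermitian). -/
def lamMin {n : ℕ} (S : Matrix (Fin n) (Fin n) ℝ) : ℝ :=
  if h : S.IsHermitian then ⨅ i, h.eigenvalues i else 0

/-- `σ_min(Mᵀ) = √(λ_min(M Mᵀ))`, the smallest singular value of `Mᵀ`. -/
def sigmaMinT {N d : ℕ} (M : Matrix (Fin N) (Fin d) ℝ) : ℝ :=
  Real.sqrt (lamMin (M * M.transpose))

/-! With `M = φ(XW)` and `R = Y − MV`, the Rayleigh bound `‖Mᵀ R‖_F² ≥ λ_min(M Mᵀ) ‖R‖_F²`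
turns the hypothesis into `ℓ' ≤ −c ℓ` with `c = 2 σ_min(Mᵀ)²`, and Grönwall's inequality
integrates this. The Grönwall argument needs `c` continuous; this holds because `λ_min` moves by
at most the entrywise `ℓ¹` distance between two symmetric matrices. Then the upper right Dini
derivative of `ℓ · exp (∫ c)` is `≤ 0`, so this function is nonincreasing. -/

open Matrix Set Filter Topology intervalIntegral

theorem EuclideanSpace.real_inner_eq_dotProduct {ι : Type*} [Fintype ι]
    (u v : EuclideanSpace ℝ ι) : inner ℝ u v = u.ofLp ⬝ᵥ v.ofLp := by
  rw [EuclideanSpace.inner_eq_star_dotProduct, star_trivial, dotProduct_comm]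

theorem lamMin_le_eigenvalues {n : ℕ} {S : Matrix (Fin n) (Fin n) ℝ} (hS : S.IsHermitian)
    (i : Fin n) : lamMin S ≤ hS.eigenvalues i := by
  rw [lamMin, dif_pos hS]
  exact ciInf_le (Set.finite_range _).bddBelow i

theorem lamMin_mul_dotProduct_self_le {n : ℕ} {S : Matrix (Fin n) (Fin n) ℝ}
    (hS : S.IsHermitian) (x : Fin n → ℝ) : lamMin S * (x ⬝ᵥ x) ≤ x ⬝ᵥ (S *ᵥ x) := by
  set b := hS.eigenvectorBasis
  have hcoef : ∀ i, (b i).ofLp ⬝ᵥ (S *ᵥ x) = hS.eigenvalues i * ((b i).ofLp ⬝ᵥ x) := by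
    intro i
    rw [dotProduct_mulVec, ← mulVec_transpose, ← conjTranspose_eq_transpose_of_trivial, hS.eq,
      hS.mulVec_eigenvectorBasis, smul_dotProduct, smul_eq_mul]
  have hparseval : ∀ y, x ⬝ᵥ y = ∑ i, ((b i).ofLp ⬝ᵥ x) * ((b i).ofLp ⬝ᵥ y) := by
    intro y
    simpa only [EuclideanSpace.real_inner_eq_dotProduct, dotProduct_comm x] using
      (b.sum_inner_mul_inner (WithLp.toLp 2 x) (WithLp.toLp 2 y)).symm
  rw [hparseval, hparseval, Finset.mul_sum]
  refine Finset.sum_le_sum fun i _ => ?_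
  rw [hcoef]
  convert mul_le_mul_of_nonneg_right (lamMin_le_eigenvalues hS i)
    (mul_self_nonneg ((b i).ofLp ⬝ᵥ x)) using 1
  ring

theorem exists_dotProduct_self_eq_one_lamMin {n : ℕ} [NeZero n] {S : Matrix (Fin n) (Fin n) ℝ}
    (hS : S.IsHermitian) : ∃ v : Fin n → ℝ, v ⬝ᵥ v = 1 ∧ v ⬝ᵥ (S *ᵥ v) = lamMin S := by
  obtain ⟨i, hi⟩ := Finite.exists_min hS.eigenvalues
  have hlam : lamMin S = hS.eigenvalues i := by
    refine le_antisymm (lamMin_le_eigenvalues hS i) ?_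
    rw [lamMin, dif_pos hS]
    exact le_ciInf hi
  set b := hS.eigenvectorBasis
  have hunit : (b i).ofLp ⬝ᵥ (b i).ofLp = 1 := by
    rw [← EuclideanSpace.real_inner_eq_dotProduct, real_inner_self_eq_norm_sq,
      b.orthonormal.1 i, one_pow]
  refine ⟨(b i).ofLp, hunit, ?_⟩
  rw [hS.mulVec_eigenvectorBasis, dotProduct_smul, hunit, smul_eq_mul, mul_one, hlam]

theorem dotProduct_mulVec_le_sum_abs {n : ℕ} (A : Matrix (Fin n) (Fin n) ℝ) {v : Fin n → ℝ}
    (hv : v ⬝ᵥ v = 1) : v ⬝ᵥ (A *ᵥ v) ≤ ∑ i, ∑ j, |A i j| := by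
  have hle : ∀ i, |v i| ≤ 1 := fun i => by
    rw [← sq_le_one_iff_abs_le_one, ← hv, dotProduct, sq]
    exact Finset.single_le_sum (f := fun j => v j * v j) (fun j _ => mul_self_nonneg _)
      (Finset.mem_univ i)
  calc v ⬝ᵥ (A *ᵥ v) = ∑ i, ∑ j, v i * A i j * v j := by
        simp only [dotProduct, mulVec, Finset.mul_sum, mul_assoc]
    _ ≤ ∑ i, ∑ j, |A i j| := by
        gcongr with i _ j _
        calc v i * A i j * v j ≤ |v i| * |A i j| * |v j| := by
              rw [← abs_mul, ← abs_mul]; exact le_abs_self _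
          _ ≤ 1 * |A i j| * 1 := by gcongr <;> exact hle _
          _ = |A i j| := by ring

theorem lamMin_le_add_sum_abs_sub {n : ℕ} {S₁ S₂ : Matrix (Fin n) (Fin n) ℝ}
    (h₁ : S₁.IsHermitian) (h₂ : S₂.IsHermitian) :
    lamMin S₁ ≤ lamMin S₂ + ∑ i, ∑ j, |S₁ i j - S₂ i j| := by
  rcases Nat.eq_zero_or_pos n with rfl | hn
  · simp [lamMin]
  have : NeZero n := ⟨hn.ne'⟩
  obtain ⟨v, hv, hvS⟩ := exists_dotProduct_self_eq_one_lamMin h₂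
  calc lamMin S₁ = lamMin S₁ * (v ⬝ᵥ v) := by rw [hv, mul_one]
    _ ≤ v ⬝ᵥ (S₁ *ᵥ v) := lamMin_mul_dotProduct_self_le h₁ v
    _ = v ⬝ᵥ (S₂ *ᵥ v) + v ⬝ᵥ ((S₁ - S₂) *ᵥ v) := by rw [sub_mulVec, dotProduct_sub]; ring
    _ ≤ lamMin S₂ + ∑ i, ∑ j, |S₁ i j - S₂ i j| := by
        rw [hvS]; gcongr; exact dotProduct_mulVec_le_sum_abs _ hv

theorem continuousOn_lamMin {n : ℕ} :
    ContinuousOn (lamMin (n := n)) {S | S.IsHermitian} := by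
  intro S₀ hS₀
  have hdist : Tendsto (fun S : Matrix (Fin n) (Fin n) ℝ => ∑ i, ∑ j, |S i j - S₀ i j|)
      (𝓝[{S | S.IsHermitian}] S₀) (𝓝 0) := by
    have hcont : Continuous (fun S : Matrix (Fin n) (Fin n) ℝ => ∑ i, ∑ j, |S i j - S₀ i j|) := by
      fun_prop
    simpa using hcont.continuousWithinAt.tendsto (s := {S | S.IsHermitian}) (x := S₀)
  rw [ContinuousWithinAt, tendsto_iff_dist_tendsto_zero]
  refine squeeze_zero' (Eventually.of_forall fun _ => dist_nonneg)
    (eventually_nhdsWithin_of_forall fun S (hS : S.IsHermitian) => ?_) hdist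
  have h₁ := lamMin_le_add_sum_abs_sub hS hS₀
  have h₂ := lamMin_le_add_sum_abs_sub hS₀ hS
  simp only [abs_sub_comm (S₀ _ _)] at h₂
  rw [Real.dist_eq, abs_sub_le_iff]
  constructor <;> linarith

theorem isHermitian_mul_transpose_self {m n : ℕ} (M : Matrix (Fin m) (Fin n) ℝ) :
    (M * Mᵀ).IsHermitian := by
  simpa only [conjTranspose_eq_transpose_of_trivial] using isHermitian_mul_conjTranspose_self M

theorem frob_sq_eq_sum_dotProduct {m n : ℕ} (A : Matrix (Fin m) (Fin n) ℝ) :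
    frob A ^ 2 = ∑ j, Aᵀ j ⬝ᵥ Aᵀ j := by
  rw [frob, Real.sq_sqrt (by positivity), Finset.sum_comm]
  simp only [dotProduct, transpose_apply, sq]

theorem lamMin_mul_frob_sq_le {N d p : ℕ} (M : Matrix (Fin N) (Fin d) ℝ)
    (R : Matrix (Fin N) (Fin p) ℝ) : lamMin (M * Mᵀ) * frob R ^ 2 ≤ frob (Mᵀ * R) ^ 2 := by
  rw [frob_sq_eq_sum_dotProduct, frob_sq_eq_sum_dotProduct, Finset.mul_sum]
  refine Finset.sum_le_sum fun j _ => ?_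
  have hcol : (Mᵀ * R)ᵀ j = Mᵀ *ᵥ Rᵀ j := by
    rw [transpose_mul, transpose_transpose, mulVec_transpose]; rfl
  calc lamMin (M * Mᵀ) * (Rᵀ j ⬝ᵥ Rᵀ j) ≤ Rᵀ j ⬝ᵥ ((M * Mᵀ) *ᵥ Rᵀ j) :=
        lamMin_mul_dotProduct_self_le (isHermitian_mul_transpose_self M) _
    _ = (Mᵀ * R)ᵀ j ⬝ᵥ (Mᵀ * R)ᵀ j := by
        rw [hcol, ← mulVec_mulVec, dotProduct_mulVec, ← mulVec_transpose]

theorem sigmaMinT_sq_mul_frob_sq_le {N d p : ℕ} (M : Matrix (Fin N) (Fin d) ℝ)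
    (R : Matrix (Fin N) (Fin p) ℝ) : sigmaMinT M ^ 2 * frob R ^ 2 ≤ frob (Mᵀ * R) ^ 2 := by
  rcases le_or_gt 0 (lamMin (M * Mᵀ)) with h | h
  · rw [sigmaMinT, Real.sq_sqrt h]
    exact lamMin_mul_frob_sq_le M R
  · rw [sigmaMinT, Real.sqrt_eq_zero_of_nonpos h.le]
    rw [zero_pow two_ne_zero, zero_mul]
    positivity

theorem continuous_relu : Continuous relu := continuous_id.max continuous_const

theorem continuous_sigmaMinT {N d : ℕ} :
    Continuous (sigmaMinT : Matrix (Fin N) (Fin d) ℝ → ℝ) :=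
  Real.continuous_sqrt.comp <| continuousOn_lamMin.comp_continuous
    (continuous_id.matrix_mul continuous_id.matrix_transpose) isHermitian_mul_transpose_self

theorem ContinuousOn.hasDerivWithinAt_integral_Ici {f : ℝ → ℝ} {a b x₀ x : ℝ}
    (hf : ContinuousOn f (Icc a b)) (hx₀ : x₀ ∈ Icc a b) (hx : x ∈ Ico a b) :
    HasDerivWithinAt (fun z => ∫ s in x₀..z, f s) (f x) (Ici x) x := by
  have hmem : Icc a b ∈ 𝓝[>] x := Icc_mem_nhdsGT_of_mem hx
  refine integral_hasDerivWithinAt_right (t := Ioi x) ?_ ?_ ?_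
  · exact (hf.mono (uIcc_subset_Icc hx₀ (Ico_subset_Icc_self hx))).intervalIntegrable
  · exact (hf.stronglyMeasurableAtFilter_nhdsWithin measurableSet_Icc x).filter_mono
      (nhdsWithin_le_of_mem hmem)
  · exact (hf x (Ico_subset_Icc_self hx)).mono_of_mem_nhdsWithin hmem

theorem HasDerivWithinAt.tendsto_slope_nhdsGT {f : ℝ → ℝ} {f' x : ℝ}
    (hf : HasDerivWithinAt f f' (Ici x) x) : Tendsto (slope f x) (𝓝[>] x) (𝓝 f') :=
  (hasDerivWithinAt_iff_tendsto_slope' (lt_irrefl x)).1 (hf.mono Ioi_subset_Ici_self)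

theorem mul_exp_integral_le_of_sub_le {u c : ℝ → ℝ} {a b : ℝ}
    (hu : ContinuousOn u (Icc a b)) (hc : ContinuousOn c (Icc a b))
    (hinc : ∀ x ∈ Ico a b, ∀ y ∈ Ioc x b, u y - u x ≤ -∫ s in x..y, c s * u s) :
    ∀ x ∈ Icc a b, u x * Real.exp (∫ s in a..x, c s) ≤ u a := by
  intro x₁ hx₁
  have ha : a ∈ Icc a b := left_mem_Icc.2 (hx₁.1.trans hx₁.2)
  set E := fun z => Real.exp (∫ s in a..z, c s)
  set v := fun z => u z * E z
  have hE : ∀ x ∈ Ico a b, HasDerivWithinAt E (E x * c x) (Ici x) x := fun x hx =>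
    (hc.hasDerivWithinAt_integral_Ici ha hx).exp
  have hEcont : ContinuousOn E (Icc a b) := by
    refine Real.continuous_exp.comp_continuousOn ?_
    have := continuousOn_primitive_interval' (μ := volume) (hc.intervalIntegrable_of_Icc ha.2)
      left_mem_uIcc
    rwa [uIcc_of_le ha.2] at this
  have hv := image_le_of_liminf_slope_right_le_deriv_boundary (f := v) (B := fun _ => v a)
    (hu.mul hEcont) le_rfl continuousOn_const (fun x _ => hasDerivWithinAt_const x _ (v a)) ?_ hx₁
  · simpa only [v, E, integral_same, Real.exp_zero, mul_one] using hv
  intro x hx r hr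
  set F := fun z => ∫ s in x..z, c s * u s
  have hF : HasDerivWithinAt F (c x * u x) (Ici x) x :=
    (hc.mul hu).hasDerivWithinAt_integral_Ici (Ico_subset_Icc_self hx) hx
  -- an upper bound for `slope v x z` (see the final `calc`) whose limit is `0`
  have hlim : Tendsto (fun z => E z * -slope F x z + u x * slope E x z) (𝓝[>] x)
      (𝓝 (E x * -(c x * u x) + u x * (E x * c x))) :=
    (((hE x hx).continuousWithinAt.mono Ioi_subset_Ici_self).tendsto.mul
      hF.tendsto_slope_nhdsGT.neg).add (tendsto_const_nhds.mul (hE x hx).tendsto_slope_nhdsGT)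
  have hzero : E x * -(c x * u x) + u x * (E x * c x) = 0 := by ring
  rw [hzero] at hlim
  refine Eventually.frequently ?_
  filter_upwards [hlim (gt_mem_nhds hr), Ioc_mem_nhdsGT hx.2] with z hz hzb
  refine lt_of_le_of_lt ?_ hz
  have hF0 : F x = 0 := integral_same
  have hslope : slope u x z ≤ -slope F x z := by
    rw [slope_def_field, slope_def_field, hF0, sub_zero, ← neg_div]
    exact div_le_div_of_nonneg_right (hinc x hx z hzb) (sub_pos.2 hzb.1).le
  calc slope v x z = E z * slope u x z + u x * slope E x z := by
        simp only [slope_def_field, v]; field_simp; ring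
    _ ≤ E z * -slope F x z + u x * slope E x z := by gcongr

theorem le_mul_exp_neg_integral_of_sub_le {u c : ℝ → ℝ} {a b : ℝ}
    (hu : ContinuousOn u (Icc a b)) (hc : ContinuousOn c (Icc a b))
    (hinc : ∀ x ∈ Ico a b, ∀ y ∈ Ioc x b, u y - u x ≤ -∫ s in x..y, c s * u s) :
    ∀ x ∈ Icc a b, u x ≤ u a * Real.exp (-∫ s in a..x, c s) := fun x hx =>
  calc u x = u x * Real.exp (∫ s in a..x, c s) * Real.exp (-∫ s in a..x, c s) := by
        rw [mul_assoc, ← Real.exp_add, add_neg_cancel, Real.exp_zero, mul_one]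
    _ ≤ u a * Real.exp (-∫ s in a..x, c s) := by
        gcongr
        exact mul_exp_integral_le_of_sub_le hu hc hinc x hx

theorem le_mul_exp_neg_integral_of_ae_le {u g c : ℝ → ℝ} {a b : ℝ} (hab : a ≤ b)
    (hc : ContinuousOn c (Icc a b)) (hg : IntervalIntegrable g volume a b)
    (hu : ∀ x ∈ Icc a b, u x - u a = ∫ s in a..x, g s)
    (hle : ∀ᵐ s, s ∈ Icc a b → g s ≤ -(c s * u s)) :
    u b ≤ u a * Real.exp (-∫ s in a..b, c s) := by
  have hucont : ContinuousOn u (Icc a b) := by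
    have hprim := continuousOn_primitive_interval' (μ := volume) hg left_mem_uIcc
    rw [uIcc_of_le hab] at hprim
    exact (continuousOn_const (c := u a)).add hprim |>.congr fun x hx => by
      simp only [Pi.add_apply]; linarith [hu x hx]
  have ha : a ∈ Icc a b := left_mem_Icc.2 hab
  have hsub : ∀ x ∈ Icc a b, ∀ y ∈ Icc a b, IntervalIntegrable g volume x y := fun x hx y hy =>
    hg.mono_set (uIcc_subset_uIcc (by rwa [uIcc_of_le hab]) (by rwa [uIcc_of_le hab]))
  refine le_mul_exp_neg_integral_of_sub_le hucont hc (fun x hx y hy => ?_) b (right_mem_Icc.2 hab)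
  have hxI : x ∈ Icc a b := Ico_subset_Icc_self hx
  have hyI : y ∈ Icc a b := ⟨hx.1.trans hy.1.le, hy.2⟩
  calc u y - u x = ∫ s in x..y, g s := by
        rw [← integral_interval_sub_left (hsub a ha y hyI) (hsub a ha x hxI), ← hu y hyI,
          ← hu x hxI]
        ring
    _ ≤ ∫ s in x..y, -(c s * u s) := by
        have hcu : IntervalIntegrable (fun s => c s * u s) volume x y :=
          ((hc.mul hucont).mono (Icc_subset_Icc hxI.1 hy.2)).intervalIntegrable_of_Icc hy.1.le
        refine integral_mono_ae_restrict hy.1.le (hsub x hxI y hyI) hcu.neg ?_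
        filter_upwards [ae_restrict_of_ae hle, ae_restrict_mem measurableSet_Icc] with s hs hsI
        exact hs ⟨hxI.1.trans hsI.1, hsI.2.trans hy.2⟩
    _ = -∫ s in x..y, c s * u s := integral_neg

theorem statement6_general
    (N d0 d1 d2 : ℕ)
    (X : Matrix (Fin N) (Fin d0) ℝ) (Y : Matrix (Fin N) (Fin d2) ℝ)
    (T : ℝ≥0∞)
    (W : ℝ → Matrix (Fin d0) (Fin d1) ℝ) (V : ℝ → Matrix (Fin d1) (Fin d2) ℝ)
    -- `W` and `V` are continuous curves on [0,T) (entrywise)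
    (hWcont : ∀ i j, ContinuousOn (fun s => W s i j) {s : ℝ | 0 ≤ s ∧ ENNReal.ofReal s < T})
    (ℓ : ℝ → ℝ) (hℓ : ℓ = fun t => mseLoss X Y (W t) (V t))
    -- `ℓ` is locally absolutely continuous on [0,T) with derivative `g`
    (g : ℝ → ℝ)
    (hFTC : ∀ t : ℝ, 0 ≤ t → ENNReal.ofReal t < T →
      IntervalIntegrable g volume 0 t ∧ ℓ t - ℓ 0 = ∫ s in (0:ℝ)..t, g s)
    -- the derivative bound: ℓ'(t) ≤ −‖φ(XW(t))ᵀ (Y − φ(XW(t))V(t))‖_F² for a.e. t ∈ [0,T)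
    (hg : ∀ᵐ s ∂volume, 0 ≤ s → ENNReal.ofReal s < T →
      g s ≤ -(frob (((X * W s).map relu).transpose *
        (Y - ((X * W s).map relu) * V s))) ^ 2) :
    ∀ t : ℝ, 0 ≤ t → ENNReal.ofReal t < T →
      ℓ t ≤ ℓ 0 * Real.exp (-2 * ∫ s in (0:ℝ)..t, (sigmaMinT ((X * W s).map relu)) ^ 2) := by
  intro t ht htT
  have hIcc : ∀ s ∈ Icc 0 t, 0 ≤ s ∧ ENNReal.ofReal s < T := fun s hs =>
    ⟨hs.1, (ENNReal.ofReal_le_ofReal hs.2).trans_lt htT⟩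
  have hσ : ContinuousOn (fun s => sigmaMinT ((X * W s).map relu)) (Icc 0 t) :=
    (continuous_sigmaMinT.comp ((continuous_const.matrix_mul continuous_id).matrix_map
      continuous_relu)).comp_continuousOn
      (continuousOn_pi.2 fun i => continuousOn_pi.2 fun j => (hWcont i j).mono hIcc)
  have hdecay := le_mul_exp_neg_integral_of_ae_le
    (c := fun s => 2 * sigmaMinT ((X * W s).map relu) ^ 2) ht (continuousOn_const.mul (hσ.pow 2))
    (hFTC t ht htT).1 (fun s hs => (hFTC s hs.1 (hIcc s hs).2).2) ?_
  · rwa [intervalIntegral.integral_const_mul, ← neg_mul] at hdecay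
  filter_upwards [hg] with s hs hsI
  have := sigmaMinT_sq_mul_frob_sq_le ((X * W s).map relu) (Y - (X * W s).map relu * V s)
  simp only [hℓ, mseLoss]
  linarith [hs (hIcc s hsI).1 (hIcc s hsI).2]

/-- exponential decay of the loss along curves whose loss derivative is
dominated by minus the squared norm of the second-layer gradient. -/
theorem statement6
    (N d0 d1 d2 : ℕ) (hN : 0 < N) (hd0 : 0 < d0) (hd1 : 0 < d1) (hd2 : 0 < d2)
    (X : Matrix (Fin N) (Fin d0) ℝ) (Y : Matrix (Fin N) (Fin d2) ℝ)
    (T : ℝ≥0∞) (hT : 0 < T)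
    (W : ℝ → Matrix (Fin d0) (Fin d1) ℝ) (V : ℝ → Matrix (Fin d1) (Fin d2) ℝ)
    -- `W` and `V` are continuous curves on [0,T) (entrywise)
    (hWcont : ∀ i j, ContinuousOn (fun s => W s i j) {s : ℝ | 0 ≤ s ∧ ENNReal.ofReal s < T})
    (hVcont : ∀ i j, ContinuousOn (fun s => V s i j) {s : ℝ | 0 ≤ s ∧ ENNReal.ofReal s < T})
    (ℓ : ℝ → ℝ) (hℓ : ℓ = fun t => mseLoss X Y (W t) (V t))
    -- `ℓ` is locally absolutely continuous on [0,T) with derivative `g`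
    (g : ℝ → ℝ)
    (hFTC : ∀ t : ℝ, 0 ≤ t → ENNReal.ofReal t < T →
      IntervalIntegrable g volume 0 t ∧ ℓ t - ℓ 0 = ∫ s in (0:ℝ)..t, g s)
    -- the derivative bound: ℓ'(t) ≤ −‖φ(XW(t))ᵀ (Y − φ(XW(t))V(t))‖_F² for a.e. t ∈ [0,T)
    (hg : ∀ᵐ s ∂volume, 0 ≤ s → ENNReal.ofReal s < T →
      g s ≤ -(frob (((X * W s).map relu).transpose *
        (Y - ((X * W s).map relu) * V s))) ^ 2) :
    ∀ t : ℝ, 0 ≤ t → ENNReal.ofReal t < T →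
      ℓ t ≤ ℓ 0 * Real.exp (-2 * ∫ s in (0:ℝ)..t, (sigmaMinT ((X * W s).map relu)) ^ 2) :=
  statement6_general N d0 d1 d2 X Y T W V hWcont ℓ hℓ g hFTC hg
end
end

section
/- For every even integer k ≥ 4, the k-th Hermite coefficient of the ReLU function satisfies μ_k(φ) = (1/√(2π)) · (−1)^{(k−2)/2} · (k−3)!! / √(k!), where (k−3)!! denotes the double factorial of k−3. -/
open MeasureTheory ProbabilityTheory

noncomputable section

/-- The `k`-th probabilists' Hermite polynomial, as a function `ℝ → ℝ`. -/
def hermiteFun (k : ℕ) (z : ℝ) : ℝ := Polynomial.aeval z (Polynomial.hermite k)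

/-- The `k`-th Hermite coefficient `μ_k(f) = E[f(g) h_k(g)] / √(E[h_k(g)²])`
of a function `f : ℝ → ℝ`, with `g` a standard Gaussian. -/
def hermiteCoeff (f : ℝ → ℝ) (k : ℕ) : ℝ :=
  (∫ z, f z * hermiteFun k z ∂(gaussianReal 0 1)) /
    Real.sqrt (∫ z, hermiteFun k z ^ 2 ∂(gaussianReal 0 1))


/-!
With `γ(x) = exp (-x²/2)`, Rodrigues' formula `(hₙ γ)' = -hₙ₊₁ γ` makes integration by
parts give `∫ p hₙ γ = ∫ p⁽ⁿ⁾ γ` for every polynomial `p`; in particular `E[hₙ(g)²] = n!`.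
For the numerator, `x hₘ₊₂(x) γ(x)` is the derivative of `-(x hₘ₊₁(x) + hₘ(x)) γ(x)`,
so `E[φ(g) hₘ₊₂(g)] = (2π)^(-1/2) ∫₀^∞ x hₘ₊₂ γ = (2π)^(-1/2) hₘ(0)`, and
`hₘ(0) = (-1)^(m/2) (m-1)!!` for even `m`.
-/

open Polynomial Real Set Filter
open scoped Nat

def gaussWeight (x : ℝ) : ℝ := exp (-(x ^ 2 / 2))

lemma hasDerivAt_gaussWeight (x : ℝ) : HasDerivAt gaussWeight (-x * gaussWeight x) x := by
  have h := ((hasDerivAt_pow 2 x).div_const 2).fun_neg.exp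
  exact h.congr_deriv (by simp only [gaussWeight]; ring)

lemma integral_gaussWeight : ∫ x, gaussWeight x = √(2 * π) := by
  have h : gaussWeight = fun x => exp (-(2⁻¹ : ℝ) * x ^ 2) := by
    ext x; rw [gaussWeight]; ring_nf
  rw [h, integral_gaussian]
  congr 1
  field_simp

lemma integral_gaussianReal_zero_one (f : ℝ → ℝ) :
    ∫ x, f x ∂gaussianReal 0 1 = (√(2 * π))⁻¹ * ∫ x, f x * gaussWeight x := by
  rw [integral_gaussianReal_eq_integral_smul one_ne_zero, ← integral_const_mul]
  congr 1 with x
  simp only [gaussianPDFReal, gaussWeight, NNReal.coe_one, mul_one, sub_zero, neg_div, smul_eq_mul]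
  ring

section PolynomialWeight

variable {R : Type*} [CommRing R] [Algebra R ℝ]

lemma integrable_pow_mul_gaussWeight (n : ℕ) : Integrable fun x => x ^ n * gaussWeight x := by
  have h := integrable_rpow_mul_exp_neg_mul_sq (b := 2⁻¹) (by norm_num) (s := n)
    (by linarith [n.cast_nonneg (α := ℝ)])
  refine h.congr (ae_of_all _ fun x => ?_)
  simp only [rpow_natCast, gaussWeight]
  ring_nf

lemma integrable_aeval_mul_gaussWeight (p : R[X]) :
    Integrable fun x => aeval x p * gaussWeight x := by
  simp_rw [aeval_eq_sum_range, Finset.sum_mul, Algebra.smul_def, mul_assoc]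
  exact integrable_finsetSum _ fun i _ => (integrable_pow_mul_gaussWeight i).const_mul _

lemma hasDerivAt_aeval_mul_gaussWeight (p : R[X]) (x : ℝ) :
    HasDerivAt (fun y => aeval y p * gaussWeight y)
      (-(aeval x (X * p - derivative p) * gaussWeight x)) x := by
  refine ((p.hasDerivAt_aeval x).mul (hasDerivAt_gaussWeight x)).congr_deriv ?_
  simp only [map_sub, map_mul, aeval_X]
  ring

lemma integral_Ioi_aeval_mul_gaussWeight (p : R[X]) (a : ℝ) :
    ∫ x in Ioi a, aeval x (X * p - derivative p) * gaussWeight x = aeval a p * gaussWeight a := by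
  have hderiv := hasDerivAt_aeval_mul_gaussWeight p
  have hint : IntegrableOn (fun x => -(aeval x (X * p - derivative p) * gaussWeight x)) (Ioi a) :=
    (integrable_aeval_mul_gaussWeight _).fun_neg.integrableOn
  have hlim := tendsto_zero_of_hasDerivAt_of_integrableOn_Ioi (fun x _ => hderiv x) hint
    (integrable_aeval_mul_gaussWeight p).integrableOn
  rw [← neg_neg (∫ x in Ioi a, _), ← integral_neg, integral_Ioi_of_hasDerivAt_of_tendsto
    (hderiv a).continuousAt.continuousWithinAt (fun x _ => hderiv x) hint hlim]
  ring

end PolynomialWeight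

lemma hasDerivAt_hermite_mul_gaussWeight (n : ℕ) (x : ℝ) :
    HasDerivAt (fun y => aeval y (hermite n) * gaussWeight y)
      (-(aeval x (hermite (n + 1)) * gaussWeight x)) x := by
  simpa only [← hermite_succ] using hasDerivAt_aeval_mul_gaussWeight (hermite n) x

lemma integrable_aeval_mul_aeval_mul_gaussWeight (p q : ℤ[X]) :
    Integrable fun x => aeval x p * (aeval x q * gaussWeight x) := by
  simpa only [map_mul, mul_assoc] using integrable_aeval_mul_gaussWeight (p * q)

lemma integral_aeval_mul_hermite_succ_mul_gaussWeight (p : ℤ[X]) (n : ℕ) :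
    ∫ x, aeval x p * (aeval x (hermite (n + 1)) * gaussWeight x) =
      ∫ x, aeval x (derivative p) * (aeval x (hermite n) * gaussWeight x) := by
  have hibp := integral_mul_deriv_eq_deriv_mul_of_integrable
    (fun x _ => p.hasDerivAt_aeval x) (fun x _ => hasDerivAt_hermite_mul_gaussWeight n x)
    (by simpa only [Pi.mul_def, mul_neg] using
      (integrable_aeval_mul_aeval_mul_gaussWeight p (hermite (n + 1))).fun_neg)
    (integrable_aeval_mul_aeval_mul_gaussWeight (derivative p) (hermite n))
    (integrable_aeval_mul_aeval_mul_gaussWeight p (hermite n))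
  simpa only [mul_neg, integral_neg, neg_inj] using hibp

lemma integral_aeval_mul_hermite_mul_gaussWeight (p : ℤ[X]) (n : ℕ) :
    ∫ x, aeval x p * (aeval x (hermite n) * gaussWeight x) =
      ∫ x, aeval x (derivative^[n] p) * gaussWeight x := by
  induction n generalizing p with
  | zero => simp
  | succ n ih =>
    rw [integral_aeval_mul_hermite_succ_mul_gaussWeight, ih, Function.iterate_succ_apply]

lemma iterate_derivative_hermite_self (n : ℕ) : derivative^[n] (hermite n) = C (n ! : ℤ) := by
  have hdeg : (derivative^[n] (hermite n)).natDegree ≤ 0 := by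
    simpa [natDegree_hermite] using natDegree_iterate_derivative (hermite n) n
  rw [eq_C_of_natDegree_le_zero hdeg, coeff_iterate_derivative]
  simp [coeff_hermite_self, Nat.descFactorial_self]

lemma integral_hermite_sq_mul_gaussWeight (n : ℕ) :
    ∫ x, aeval x (hermite n) ^ 2 * gaussWeight x = n ! * √(2 * π) := by
  simp_rw [sq, mul_assoc, integral_aeval_mul_hermite_mul_gaussWeight,
    iterate_derivative_hermite_self, aeval_C, algebraMap_int_eq, eq_intCast, Int.cast_natCast]
  rw [integral_const_mul, integral_gaussWeight]

lemma X_mul_sub_derivative_eq_X_mul_hermite_add_two (m : ℕ) :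
    X * (X * hermite (m + 1) + hermite m) - derivative (X * hermite (m + 1) + hermite m) =
      X * hermite (m + 2) := by
  simp only [hermite_succ (m + 1), derivative_add, derivative_mul, derivative_X, one_mul]
  linear_combination (-1 : ℤ[X]) * hermite_succ m

lemma relu_mul_eq_indicator (f : ℝ → ℝ) :
    (fun x => relu x * f x) = (Ioi 0).indicator fun x => x * f x := by
  ext x
  by_cases hx : 0 < x
  · simp [relu, indicator_of_mem, hx, hx.le]
  · simp [relu, indicator_of_notMem, hx, not_lt.mp hx]

lemma integral_relu_mul_hermite_mul_gaussWeight (m : ℕ) :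
    ∫ x, relu x * (aeval x (hermite (m + 2)) * gaussWeight x) = (hermite m).coeff 0 := by
  rw [relu_mul_eq_indicator, integral_indicator measurableSet_Ioi]
  have h := integral_Ioi_aeval_mul_gaussWeight (X * hermite (m + 1) + hermite m) 0
  rw [X_mul_sub_derivative_eq_X_mul_hermite_add_two] at h
  simp only [map_mul, aeval_X, mul_assoc] at h
  rw [h]
  simp [gaussWeight, ← coeff_zero_eq_aeval_zero']

lemma hermiteCoeff_eq_integral_mul_gaussWeight (f : ℝ → ℝ) (n : ℕ) :
    hermiteCoeff f n =
      (√(2 * π))⁻¹ * (∫ x, f x * (aeval x (hermite n) * gaussWeight x)) / √(n ! : ℝ) := by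
  have hnorm : ∫ x, hermiteFun n x ^ 2 ∂gaussianReal 0 1 = n ! := by
    rw [integral_gaussianReal_zero_one]
    simp only [hermiteFun, integral_hermite_sq_mul_gaussWeight]
    field_simp
  rw [hermiteCoeff, hnorm, integral_gaussianReal_zero_one]
  simp only [hermiteFun, mul_assoc]

/-- explicit formula for the even Hermite coefficients of ReLU. -/
theorem statement11 (k : ℕ) (hk : 4 ≤ k) (hke : Even k) :
    hermiteCoeff relu k =
      (Real.sqrt (2 * Real.pi))⁻¹ * (-1 : ℝ) ^ ((k - 2) / 2) *
        (Nat.doubleFactorial (k - 3) : ℝ) / Real.sqrt (Nat.factorial k) := by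
  obtain ⟨m, rfl⟩ : ∃ m, k = m + 2 := ⟨k - 2, by omega⟩
  have hm : Even (m + 0) := by simpa [Nat.even_add_one] using hke
  rw [hermiteCoeff_eq_integral_mul_gaussWeight, integral_relu_mul_hermite_mul_gaussWeight,
    coeff_hermite_of_even_add hm, show m + 2 - 3 = m - 1 by omega]
  push_cast
  simp only [Nat.sub_zero, Nat.choose_zero_right, Nat.cast_one, mul_one]
  ring
end
end

section
/- For every A ∈ ℝ^{p×m}, x ∈ ℝ^m, and B ∈ ℝ^{m×q}: ‖A · diag(x) · B‖_F ≤ ‖A‖_op · ‖x‖₂ · max_{i ∈ [m]} ‖B_{i:}‖₂, where diag(x) ∈ ℝ^{m×m} is the diagonal matrix with diagonal entries x₁, …, x_m and B_{i:} denotes the i-th row of B. -/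
noncomputable section

/-- `‖A diag(x) B‖_F ≤ ‖A‖_op ‖x‖₂ max_i ‖B_{i:}‖₂`. -/
theorem statement16 (p m q : ℕ) (hm : 0 < m)
    (A : Matrix (Fin p) (Fin m) ℝ) (x : Fin m → ℝ) (B : Matrix (Fin m) (Fin q) ℝ) :
    frob (A * Matrix.diagonal x * B) ≤
      opNorm A * Real.sqrt (∑ i, x i ^ 2) *
        Finset.univ.sup' ⟨⟨0, hm⟩, Finset.mem_univ _⟩
          (fun i => Real.sqrt (∑ j, B i j ^ 2)) := by
  set K := opNorm A with hKdef
  have hK : 0 ≤ K := norm_nonneg _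
  set R := Finset.univ.sup' ⟨⟨0, hm⟩, Finset.mem_univ _⟩
      (fun i => Real.sqrt (∑ j, B i j ^ 2)) with hRdef
  have hR : 0 ≤ R := by
    rw [hRdef]
    exact (Real.sqrt_nonneg _).trans
      (Finset.le_sup' (fun i => Real.sqrt (∑ j, B i j ^ 2)) (Finset.mem_univ (⟨0, hm⟩ : Fin m)))
  -- column bound
  have key : ∀ j : Fin q, ∑ i, ((A * Matrix.diagonal x * B) i j) ^ 2
      ≤ K ^ 2 * ∑ i, (x i * B i j) ^ 2 := by
    intro j
    set v : EuclideanSpace ℝ (Fin m) := (WithLp.equiv 2 _).symm (fun i => x i * B i j) with hv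
    have hAv : ∀ i, (A * Matrix.diagonal x * B) i j = (Matrix.toEuclideanLin A v) i := by
      intro i
      simp [Matrix.mul_apply, Matrix.toEuclideanLin_apply, Matrix.mulVec, dotProduct,
        Matrix.diagonal, hv, Finset.sum_mul, mul_assoc]
    have hle : ‖Matrix.toEuclideanLin A v‖ ≤ K * ‖v‖ :=
      (LinearMap.toContinuousLinearMap (Matrix.toEuclideanLin A)).le_opNorm v
    have hsq : ‖Matrix.toEuclideanLin A v‖ ^ 2 ≤ K ^ 2 * ‖v‖ ^ 2 := by
      rw [show K ^ 2 * ‖v‖ ^ 2 = (K * ‖v‖) ^ 2 by ring]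
      exact pow_le_pow_left₀ (norm_nonneg _) hle 2
    have hnAv : ∑ i, ((A * Matrix.diagonal x * B) i j) ^ 2 = ‖Matrix.toEuclideanLin A v‖ ^ 2 := by
      rw [EuclideanSpace.norm_eq, Real.sq_sqrt (by positivity)]
      simp [hAv, sq_abs]
    have hnv : ‖v‖ ^ 2 = ∑ i, (x i * B i j) ^ 2 := by
      rw [EuclideanSpace.norm_eq, Real.sq_sqrt (by positivity)]
      simp [hv, mul_pow, sq_abs]
    rw [hnAv, ← hnv]
    exact hsq
  have sum_bound : ∑ j, ∑ i, ((A * Matrix.diagonal x * B) i j) ^ 2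
      ≤ K ^ 2 * (∑ i, x i ^ 2) * R ^ 2 := by
    calc ∑ j, ∑ i, ((A * Matrix.diagonal x * B) i j) ^ 2
        ≤ ∑ j : Fin q, K ^ 2 * ∑ i, (x i * B i j) ^ 2 :=
          Finset.sum_le_sum fun j _ => key j
      _ = K ^ 2 * ∑ i, x i ^ 2 * ∑ j, B i j ^ 2 := by
          rw [← Finset.mul_sum, Finset.sum_comm]
          congr 1
          refine Finset.sum_congr rfl fun i _ => ?_
          rw [Finset.mul_sum]
          exact Finset.sum_congr rfl fun j _ => by ring
      _ ≤ K ^ 2 * ∑ i, x i ^ 2 * R ^ 2 := by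
          apply mul_le_mul_of_nonneg_left _ (by positivity)
          apply Finset.sum_le_sum
          intro i _
          apply mul_le_mul_of_nonneg_left _ (sq_nonneg (x i))
          have h1 : Real.sqrt (∑ j, B i j ^ 2) ≤ R := by
            rw [hRdef]
            exact Finset.le_sup' (fun i => Real.sqrt (∑ j, B i j ^ 2)) (Finset.mem_univ i)
          calc ∑ j, B i j ^ 2 = Real.sqrt (∑ j, B i j ^ 2) ^ 2 :=
                (Real.sq_sqrt (by positivity)).symm
            _ ≤ R ^ 2 := pow_le_pow_left₀ (Real.sqrt_nonneg _) h1 2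
      _ = K ^ 2 * (∑ i, x i ^ 2) * R ^ 2 := by
          rw [← Finset.sum_mul, mul_assoc]
  rw [frob, Finset.sum_comm]
  calc Real.sqrt (∑ j, ∑ i, ((A * Matrix.diagonal x * B) i j) ^ 2)
      ≤ Real.sqrt (K ^ 2 * (∑ i, x i ^ 2) * R ^ 2) := Real.sqrt_le_sqrt sum_bound
    _ = K * Real.sqrt (∑ i, x i ^ 2) * R := by
        rw [Real.sqrt_mul (by positivity), Real.sqrt_mul (by positivity),
          Real.sqrt_sq hK, Real.sqrt_sq hR]
end
end
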